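/- If f satisfies the sure thing principle and the communication graph G contains a strongly connected, symmetric spanning subgraph, then every fixed point of the update function g is a consensus profile: Fix(g) = Cons(f). -/

import Mathlib

/-- The block of the partition (setoid) `P` containing `x`. -/
def blk {X : Type*} (P : Setoid X) (x : X) : Set X := {y | P x y}

/-- The message sent at state `x` by an agent with information `P`,
given the message function `f`. -/
def msg {X A : Type*} (f : Set X → A) (P : Setoid X) (x : X) : A := f (blk P x)

/-- The working partition of `P` induced by the message function `f`:
two states are equivalent iff the same message is sent at them. -/
def wp {X A : Type*} (f : Set X → A) (P : Setoid X) : Setoid X := Setoid.ker (msg f P)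

/-- The sure thing principle: for any nonempty `S` and any partition of `S`
into nonempty blocks all mapped by `f` to `a`, `f S = a`. -/
def STPred {X A : Type*} (f : Set X → A) : Prop :=
  ∀ (S : Set X) (C : Set (Set X)) (a : A), S.Nonempty →
    (∀ B ∈ C, B.Nonempty) → C.PairwiseDisjoint id → ⋃₀ C = S →
    (∀ B ∈ C, f B = a) → f S = a

open scoped Classical in
/- The update function on profiles of partitions induced by the graph `G`:
if `i` has senders, `i` refines her partition by joining (in the refinement
order: `⊓` in the `Setoid` order, which is the coarsest common refinement)
with the working partitions of all her senders; else her partition stays put.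
Note: in the `Setoid` order, smaller = finer, so the paper's coarsening order
`P ≤ Q` ("Q refines P") is `Q ≤ P` here, the paper's join is `⊓`, and the
paper's meet is `⊔`. -/
noncomputable def update {X A I : Type*} (f : Set X → A) (G : I → I → Prop)
    (P : I → Setoid X) (i : I) : Setoid X :=
  if (∃ j, G j i) then ⨅ j ∈ {j | G j i}, (P i ⊓ wp f (P j)) else P i

/-!
At a fixed point of `update`, every agent's partition refines the working partition of each
of her senders. Along an edge `i — j` of the symmetric subgraph this holds both ways, so the
common coarsening `P i ⊔ P j` is squeezed between `P i` and `wp f (P i)`: each of its blocks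
is a disjoint union of `P i`-blocks carrying one and the same message, and by the sure thing
principle it carries that message too. Hence `msg f (P i) = msg f (P i ⊔ P j) = msg f (P j)`,
and connectivity spreads the equality to all agents. Conversely, at a consensus profile all
working partitions equal `wp f (P i)`, which `P i` already refines, so `update` changes nothing.
-/

section Partition

variable {X A : Type*}

lemma blk_eq_of_rel {P : Setoid X} {x y : X} (h : P x y) : blk P x = blk P y := by
  ext z
  exact ⟨P.trans' (P.symm' h), P.trans' h⟩

lemma le_wp_self (f : Set X → A) (P : Setoid X) : P ≤ wp f P := fun _ _ hxy =>
  congrArg f (blk_eq_of_rel hxy)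

lemma msg_eq_of_le_of_le_wp {f : Set X → A} (hstp : STPred f) {P R : Setoid X}
    (hPR : P ≤ R) (hRw : R ≤ wp f P) : msg f R = msg f P := by
  funext x
  refine hstp (blk R x) {B | ∃ y, R x y ∧ B = blk P y} (msg f P x)
    ⟨x, R.refl' x⟩ ?nonempty ?disjoint ?cover ?value
  case nonempty =>
    rintro B ⟨y, -, rfl⟩
    exact ⟨y, P.refl' y⟩
  case disjoint =>
    rintro B ⟨y, -, rfl⟩ B' ⟨y', -, rfl⟩ hne
    refine Set.disjoint_left.2 fun z (hz : P y z) (hz' : P y' z) => hne ?_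
    exact (blk_eq_of_rel hz).trans (blk_eq_of_rel hz').symm
  case cover =>
    ext z
    constructor
    · rintro ⟨B, ⟨y, hy, rfl⟩, hz⟩
      exact R.trans' hy (hPR hz)
    · intro hz
      exact ⟨blk P z, ⟨z, hz, rfl⟩, P.refl' z⟩
  case value =>
    rintro B ⟨y, hy, rfl⟩
    exact (hRw hy).symm

lemma msg_eq_of_le_wp_of_le_wp {f : Set X → A} (hstp : STPred f) {P Q : Setoid X}
    (hPQ : P ≤ wp f Q) (hQP : Q ≤ wp f P) : msg f P = msg f Q := by
  have hP : msg f (P ⊔ Q) = msg f P :=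
    msg_eq_of_le_of_le_wp hstp le_sup_left (sup_le (le_wp_self f P) hQP)
  have hQ : msg f (P ⊔ Q) = msg f Q :=
    msg_eq_of_le_of_le_wp hstp le_sup_right (sup_le hPQ (le_wp_self f Q))
  rw [← hP, hQ]

end Partition

section Update

variable {X A I : Type*} {f : Set X → A} {G : I → I → Prop} {P : I → Setoid X}

lemma le_wp_of_update_apply_eq {i j : I} (hP : update f G P i = P i) (hji : G j i) :
    P i ≤ wp f (P j) := by
  rw [update, if_pos ⟨j, hji⟩] at hP
  calc P i = ⨅ k ∈ {k | G k i}, (P i ⊓ wp f (P k)) := hP.symm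
    _ ≤ P i ⊓ wp f (P j) := iInf₂_le j hji
    _ ≤ wp f (P j) := inf_le_right

lemma update_eq_self_of_msg_eq (hcons : ∀ i j, msg f (P i) = msg f (P j)) :
    update f G P = P := by
  funext i
  rw [update]
  split_ifs with hsender
  · obtain ⟨j, hj⟩ := hsender
    refine le_antisymm ((iInf₂_le j hj).trans inf_le_left) ?_
    refine le_iInf₂ fun k _ => le_inf le_rfl ?_
    rw [wp, hcons k i]
    exact le_wp_self f (P i)
  · rfl

end Update

theorem stmt_9_general {X A I : Type*} (f : Set X → A) (hstp : STPred f)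
    (G G' : I → I → Prop) (hsub : ∀ i j, G' i j → G i j)
    (hsymm : ∀ i j, G' i j → G' j i)
    (hconn : ∀ i j : I, i ≠ j → Relation.TransGen G' i j) :
    {P : I → Setoid X | update f G P = P} =
      {P : I → Setoid X | ∀ i j, msg f (P i) = msg f (P j)} := by
  ext P
  refine ⟨fun hfix => ?_, update_eq_self_of_msg_eq⟩
  have hedge : ∀ i j, G' i j → msg f (P i) = msg f (P j) := fun i j hij =>
    msg_eq_of_le_wp_of_le_wp hstp
      (le_wp_of_update_apply_eq (congrFun hfix i) (hsub j i (hsymm i j hij)))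
      (le_wp_of_update_apply_eq (congrFun hfix j) (hsub i j hij))
  intro i j
  rcases eq_or_ne i j with rfl | hij
  · rfl
  · simpa only [Relation.transGen_eq_self] using
      (hconn i j hij).lift (fun k => msg f (P k)) hedge

/-- If `f` satisfies the STP and `G` contains a strongly connected,
symmetric spanning subgraph `G'`, then the fixed points of the update `g` are
exactly the consensus profiles: `Fix(g) = Cons(f)`. -/
theorem stmt_9 {X A I : Type*} [Fintype I] (f : Set X → A) (hstp : STPred f)
    (G G' : I → I → Prop) (hsub : ∀ i j, G' i j → G i j)
    (hsymm : ∀ i j, G' i j → G' j i)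
    (hconn : ∀ i j : I, i ≠ j → Relation.TransGen G' i j) :
    {P : I → Setoid X | update f G P = P} =
      {P : I → Setoid X | ∀ i j, msg f (P i) = msg f (P j)} :=
  stmt_9_general f hstp G G' hsub hsymm hconn
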